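/- arXiv:2006.10537 — 3 statements merged into one kernel-verified Lean document; each statement's English description precedes it below -/
import Mathlib

section
/- Let N be an abelian group, H a monoid, (E,φ) a compatible pair, and g : H × H → N a factor set relative to (E,φ). Then the set ⨆_{h∈H} N/∼^h with unit ([g(1,1)^{-1}],1)-adjusted appropriately (equivalently, with unit ([1],1) after normalizing g) and multiplication ([n],h)·([n'],h') = ([n·φ(h,n')·g(h,h')], h·h') is a monoid. -/
/-- An admissible H-indexed equivalence relation E on N: for each h an equivalence
relation ∼^h on N such that ∼^1 is equality, left multiplication preserves ∼^h, and
n ∼^h n' implies n ∼^{h·y} n'. -/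
structure IndexedEqv (H N : Type*) [Monoid H] [Monoid N] where
  r : H → N → N → Prop
  iseqv : ∀ h, Equivalence (r h)
  one_eq : ∀ {n n' : N}, r 1 n n' → n = n'
  mul_left : ∀ (x : N) {h : H} {n n' : N}, r h n n' → r h (x * n) (x * n')
  mul_right : ∀ (y : H) {h : H} {n n' : N}, r h n n' → r (h * y) n n'

def IndexedEqv.setoid {H N : Type*} [Monoid H] [Monoid N] (E : IndexedEqv H N) (h : H) :
    Setoid N := ⟨E.r h, E.iseqv h⟩

/-- α : H × N → N is a compatible action for the admissible indexed equivalence relation E. -/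
structure CompatibleAction {H N : Type*} [Monoid H] [Monoid N] (E : IndexedEqv H N)
    (α : H → N → N) : Prop where
  c1 : ∀ (h : H) (n n' x : N), E.r h n n' → E.r h (n * α h x) (n' * α h x)
  c2 : ∀ (h : H) (n n' : N) (x : H), E.r h n n' → E.r (x * h) (α x n) (α x n')
  c3 : ∀ (h : H) (n n' : N), E.r h (α h (n * n')) (α h n * α h n')
  c4 : ∀ (h h' : H) (n : N), E.r (h * h') (α (h * h') n) (α h (α h' n))
  c5 : ∀ h : H, E.r h (α h 1) 1
  c6 : ∀ n : N, E.r 1 (α 1 n) n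

/-- The carrier ⨆_{h ∈ H} N/∼^h of the weak semidirect product. -/
def WProd {H N : Type*} [Monoid H] [Monoid N] (E : IndexedEqv H N) : Type _ :=
  (h : H) × Quotient (E.setoid h)

/-- The element ([n], h). -/
def wmk {H N : Type*} [Monoid H] [Monoid N] (E : IndexedEqv H N) (h : H) (n : N) : WProd E :=
  ⟨h, Quotient.mk (E.setoid h) n⟩

/-- The multiplication ([n],h)·([n'],h') = ([n·α(h,n')], h·h') of the weak semidirect
product N ⋊_{E,α} H. -/
def wmul {H N : Type*} [Monoid H] [Monoid N] (E : IndexedEqv H N) {α : H → N → N}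
    (hα : CompatibleAction E α) : WProd E → WProd E → WProd E :=
  fun x y =>
    ⟨x.1 * y.1,
      Quotient.liftOn₂ x.2 y.2
        (fun n n' => Quotient.mk (E.setoid (x.1 * y.1)) (n * α x.1 n'))
        (fun a c b d hab hcd =>
          Quotient.sound
            ((E.iseqv (x.1 * y.1)).trans
              (E.mul_right y.1 (hα.c1 x.1 a b c hab))
              (E.mul_left b (hα.c2 y.1 c d x.1 hcd))))⟩

/-- A factor set relative to the compatible pair (E, α), with abelian group kernel N:
g(h,1) ∼^h 1 ∼^h g(1,h) and g(x,y)·g(xy,z) ∼^{xyz} α(x, g(y,z))·g(x, yz). -/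
def IsFactorSet {H N : Type*} [Monoid H] [CommGroup N] (E : IndexedEqv H N)
    (α : H → N → N) (g : H → H → N) : Prop :=
  (∀ h : H, E.r h (g h 1) 1) ∧ (∀ h : H, E.r h (g 1 h) 1) ∧
  ∀ x y z : H, E.r (x * y * z) (g x y * g (x * y) z) (α x (g y z) * g x (y * z))

/-- The multiplication ([n],h)·([n'],h') = ([n·α(h,n')·g(h,h')], h·h') of
N ⋊_{E,α}^g H. -/
def wgmul {H N : Type*} [Monoid H] [CommGroup N] (E : IndexedEqv H N) {α : H → N → N}
    (g : H → H → N) (hα : CompatibleAction E α) : WProd E → WProd E → WProd E :=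
  fun x y =>
    ⟨x.1 * y.1,
      Quotient.liftOn₂ x.2 y.2
        (fun n n' => Quotient.mk (E.setoid (x.1 * y.1)) (n * α x.1 n' * g x.1 y.1))
        (by
          intro a c b d hab hcd
          apply Quotient.sound
          have h1 : E.r (x.1 * y.1) (a * α x.1 c) (b * α x.1 d) :=
            (E.iseqv _).trans (E.mul_right y.1 (hα.c1 x.1 a b c hab))
              (E.mul_left b (hα.c2 y.1 c d x.1 hcd))
          have h2 := E.mul_left (g x.1 y.1) h1
          show E.r (x.1 * y.1) (a * α x.1 c * g x.1 y.1) (b * α x.1 d * g x.1 y.1)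
          simpa [mul_comm, mul_assoc, mul_left_comm] using h2)⟩

/-!
Since `N` is commutative, every relation `∼^h` is a multiplicative congruence, so the axioms of a
compatible action and of a factor set become equations in the commutative monoids `N/∼^k`, and a
relation at index `h` survives in `N/∼^k` whenever `h ∣ k`. The unit laws are then `α(1, n) = n`,
`α(h, 1) = 1` and the normalisation of `g`; associativity of the product of three elements with
`H`-components `h, h', h''` is checked in `N/∼^{h h' h''}`, where it reduces to multiplicativity of
`α(h, -)`, `α(h, α(h', n)) = α(h h', n)` and the cocycle identity for `g`.
-/

section Congruence

variable {H N : Type*} [Monoid H] [CommMonoid N] (E : IndexedEqv H N)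

def IndexedEqv.con (h : H) : Con N where
  toSetoid := E.setoid h
  mul' {a b c d} hab hcd := (E.iseqv h).trans
    (by simpa only [mul_comm _ c] using E.mul_left c hab) (E.mul_left b hcd)

variable {E}

lemma IndexedEqv.coe_eq_coe_of_dvd {h k : H} {a b : N} (hk : h ∣ k) (hr : E.r h a b) :
    (a : (E.con k).Quotient) = b := by
  obtain ⟨y, rfl⟩ := hk
  exact (Con.eq _).2 (E.mul_right y hr)

lemma wmk_eq_wmk {h : H} {n n' : N} (hq : (n : (E.con h).Quotient) = n') :
    wmk E h n = wmk E h n' :=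
  congrArg (Sigma.mk h) (Quotient.sound ((Con.eq _).1 hq))

lemma WProd.exists_eq_wmk (x : WProd E) : ∃ h n, x = wmk E h n := by
  obtain ⟨h, q⟩ := x
  induction q using Quotient.inductionOn with
  | h n => exact ⟨h, n, rfl⟩

end Congruence

section FactorSet

variable {H N : Type*} [Monoid H] [CommGroup N] {E : IndexedEqv H N} {α : H → N → N}
  (hα : CompatibleAction E α) {g : H → H → N}

lemma wgmul_wmk (h h' : H) (n n' : N) :
    wgmul E g hα (wmk E h n) (wmk E h' n') = wmk E (h * h') (n * α h n' * g h h') :=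
  rfl

lemma IsFactorSet.wgmul_one_left (hg : IsFactorSet E α g) (h : H) (n : N) :
    wgmul E g hα (wmk E 1 1) (wmk E h n) = wmk E h n := by
  rw [wgmul_wmk, one_mul]
  apply wmk_eq_wmk
  have hact : (α 1 n : (E.con h).Quotient) = n := E.coe_eq_coe_of_dvd (one_dvd h) (hα.c6 n)
  have hnorm : (g 1 h : (E.con h).Quotient) = 1 := (Con.eq _).2 (hg.2.1 h)
  rw [Con.coe_mul, Con.coe_mul, hact, hnorm, Con.coe_one, one_mul, mul_one]

lemma IsFactorSet.wgmul_one_right (hg : IsFactorSet E α g) (h : H) (n : N) :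
    wgmul E g hα (wmk E h n) (wmk E 1 1) = wmk E h n := by
  rw [wgmul_wmk, mul_one]
  apply wmk_eq_wmk
  have hact : (α h 1 : (E.con h).Quotient) = 1 := (Con.eq _).2 (hα.c5 h)
  have hnorm : (g h 1 : (E.con h).Quotient) = 1 := (Con.eq _).2 (hg.1 h)
  rw [Con.coe_mul, Con.coe_mul, hact, hnorm, mul_one, mul_one]

lemma IsFactorSet.wgmul_assoc (hg : IsFactorSet E α g) (h h' h'' : H) (n n' n'' : N) :
    wgmul E g hα (wgmul E g hα (wmk E h n) (wmk E h' n')) (wmk E h'' n'') =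
      wgmul E g hα (wmk E h n) (wgmul E g hα (wmk E h' n') (wmk E h'' n'')) := by
  rw [wgmul_wmk, wgmul_wmk, wgmul_wmk, wgmul_wmk, mul_assoc h h' h'']
  apply wmk_eq_wmk
  set k := h * (h' * h'')
  have hmul (a b : N) : (α h (a * b) : (E.con k).Quotient) = α h a * α h b :=
    E.coe_eq_coe_of_dvd (dvd_mul_right _ _) (hα.c3 h a b)
  have hcomp : (α h (α h' n'') : (E.con k).Quotient) = α (h * h') n'' :=
    (E.coe_eq_coe_of_dvd ⟨h'', (mul_assoc h h' h'').symm⟩ (hα.c4 h h' n'')).symm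
  have hcoc : (α h (g h' h'') * g h (h' * h'') : (E.con k).Quotient) =
      g h h' * g (h * h') h'' :=
    (E.coe_eq_coe_of_dvd (mul_assoc h h' h'').dvd (hg.2.2 h h' h'')).symm
  simp only [Con.coe_mul, hmul, hcomp] at hcoc ⊢
  rw [mul_right_comm _ _ (α (h * h') n'' : (E.con k).Quotient),
    mul_assoc _ _ (g (h * h') h'' : (E.con k).Quotient), ← hcoc]
  simp only [mul_assoc]

end FactorSet

/-- Let N be an abelian group, H a monoid, (E,α) a compatible pair and g a
factor set relative to (E,α). Then ⨆_{h∈H} N/∼^h with unit ([1],1) and multiplication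
([n],h)·([n'],h') = ([n·α(h,n')·g(h,h')], h·h') is a monoid. -/
theorem wgprod_monoid {H N : Type*} [Monoid H] [CommGroup N] (E : IndexedEqv H N)
    (α : H → N → N) (hα : CompatibleAction E α) (g : H → H → N)
    (hg : IsFactorSet E α g) :
    ∃ M : Monoid (WProd E),
      M.one = wmk E 1 1 ∧
      ∀ (h h' : H) (n n' : N),
        M.mul (wmk E h n) (wmk E h' n') = wmk E (h * h') (n * α h n' * g h h') := by
  refine ⟨{ mul := wgmul E g hα, one := wmk E 1 1,
            one_mul := ?_, mul_one := ?_, mul_assoc := ?_ }, rfl, fun _ _ _ _ => rfl⟩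
  · intro x y z
    obtain ⟨h, n, rfl⟩ := x.exists_eq_wmk
    obtain ⟨h', n', rfl⟩ := y.exists_eq_wmk
    obtain ⟨h'', n'', rfl⟩ := z.exists_eq_wmk
    exact hg.wgmul_assoc hα h h' h'' n n' n''
  · intro x
    obtain ⟨h, n, rfl⟩ := x.exists_eq_wmk
    exact hg.wgmul_one_left hα h n
  · intro x
    obtain ⟨h, n, rfl⟩ := x.exists_eq_wmk
    exact hg.wgmul_one_right hα h n
end

section
/- Every endomorphism f of the cosetal extension N →k→ N ⋊_{E,φ}^g H →e→ H (with N an abelian group) is an automorphism; explicitly, f has the form f([n],h) = ([t(h)·n], h) for some function t : H → N, and ([n],h) ↦ ([t(h)^{-1}·n], h) is its inverse. -/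
/-! Since `g(1,h) ∼^h 1`, every element factors as `([n],h) = k(n) · ([1],h)`. An endomorphism
fixes `k(n)` and preserves the `H`-component, so it sends `([1],h)` to some `([t(h)],h)` and hence
`([n],h)` to `([n],1) · ([t(h)],h) = ([t(h)·n],h)`. Translations of the fibres by `t` and by `t⁻¹`
are well defined because `∼^h` is invariant under left multiplication, and they are mutually
inverse. -/

namespace WProd

variable {H N : Type*} [Monoid H]

section Monoid

variable [Monoid N] (E : IndexedEqv H N)

theorem wmk_eq_wmk {h : H} {a b : N} (hab : E.r h a b) : wmk E h a = wmk E h b :=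
  congrArg (Sigma.mk h) (Quotient.sound hab)

@[elab_as_elim]
theorem ind {P : WProd E → Prop} (hP : ∀ h n, P (wmk E h n)) (x : WProd E) : P x := by
  obtain ⟨h, q⟩ := x
  induction q using Quotient.ind
  exact hP h _

theorem exists_eq_wmk_of_fst_eq {x : WProd E} {h : H} (hx : x.1 = h) : ∃ n, x = wmk E h n := by
  obtain ⟨h', q⟩ := x
  subst hx
  obtain ⟨n, rfl⟩ := q.exists_rep
  exact ⟨n, rfl⟩

def translate (s : H → N) (x : WProd E) : WProd E :=
  ⟨x.1, Quotient.map (s x.1 * ·) (fun _ _ => E.mul_left (s x.1)) x.2⟩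

@[simp]
theorem translate_wmk (s : H → N) (h : H) (n : N) :
    translate E s (wmk E h n) = wmk E h (s h * n) :=
  rfl

theorem translate_one (x : WProd E) : translate E 1 x = x := by
  induction x using WProd.ind with
  | hP h n => simp

theorem translate_translate (s s' : H → N) (x : WProd E) :
    translate E s (translate E s' x) = translate E (s * s') x := by
  induction x using WProd.ind with
  | hP h n => simp [mul_assoc]

end Monoid

theorem translate_inv_translate [Group N] (E : IndexedEqv H N) (s : H → N) (x : WProd E) :
    translate E s⁻¹ (translate E s x) = x := by
  rw [translate_translate, inv_mul_cancel, translate_one]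

theorem translate_translate_inv [Group N] (E : IndexedEqv H N) (s : H → N) (x : WProd E) :
    translate E s (translate E s⁻¹ x) = x := by
  rw [translate_translate, mul_inv_cancel, translate_one]

end WProd

open WProd

theorem CompatibleAction.apply_one {H N : Type*} [Monoid H] [Monoid N] {E : IndexedEqv H N}
    {α : H → N → N} (hα : CompatibleAction E α) (n : N) : α 1 n = n :=
  E.one_eq (hα.c6 n)

section Extension

variable {H N : Type*} [Monoid H] [CommGroup N] {E : IndexedEqv H N} {α : H → N → N}
  (hα : CompatibleAction E α) {g : H → H → N}

theorem wgmul_wmk_one_left (hg : ∀ h, E.r h (g 1 h) 1) (n : N) (h : H) (m : N) :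
    wgmul E g hα (wmk E 1 n) (wmk E h m) = wmk E h (n * m) := by
  have hr : E.r h (n * α 1 m * g 1 h) (n * m) := by
    simpa only [hα.apply_one, mul_one] using E.mul_left (n * m) (hg h)
  exact (congrArg (fun h' => wmk E h' (n * α 1 m * g 1 h)) (one_mul h)).trans
    (wmk_eq_wmk E hr)

theorem eq_translate_of_endomorphism (hg : ∀ h, E.r h (g 1 h) 1) {f : WProd E → WProd E}
    (hmul : ∀ x y, f (wgmul E g hα x y) = wgmul E g hα (f x) (f y))
    (hk : ∀ n : N, f (wmk E 1 n) = wmk E 1 n) (he : ∀ x : WProd E, (f x).1 = x.1) :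
    ∃ t : H → N, f = translate E t := by
  choose t ht using fun h => exists_eq_wmk_of_fst_eq E (h := h) (he (wmk E h 1))
  refine ⟨t, funext fun x => ?_⟩
  induction x using WProd.ind with
  | hP h n =>
    calc f (wmk E h n) = f (wgmul E g hα (wmk E 1 n) (wmk E h 1)) := by
          rw [wgmul_wmk_one_left hα hg, mul_one]
      _ = wgmul E g hα (wmk E 1 n) (wmk E h (t h)) := by rw [hmul, hk, ht]
      _ = wmk E h (t h * n) := by rw [wgmul_wmk_one_left hα hg, mul_comm]

end Extension

theorem endomorphism_is_automorphism_general {H N : Type*} [Monoid H] [CommGroup N]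
    (E : IndexedEqv H N) (α : H → N → N) (hα : CompatibleAction E α)
    (g : H → H → N) (hg : IsFactorSet E α g)
    (f : WProd E → WProd E)
    (hmul : ∀ x y, f (wgmul E g hα x y) = wgmul E g hα (f x) (f y))
    (hk : ∀ n : N, f (wmk E 1 n) = wmk E 1 n)
    (he : ∀ x : WProd E, (f x).1 = x.1) :
    ∃ t : H → N,
      (∀ (h : H) (n : N), f (wmk E h n) = wmk E h (t h * n)) ∧
      ∃ finv : WProd E → WProd E,
        (∀ (h : H) (n : N), finv (wmk E h n) = wmk E h ((t h)⁻¹ * n)) ∧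
        (∀ x, finv (f x) = x) ∧ (∀ x, f (finv x) = x) := by
  obtain ⟨t, rfl⟩ := eq_translate_of_endomorphism hα hg.2.1 hmul hk he
  exact ⟨t, translate_wmk E t, translate E t⁻¹, translate_wmk E t⁻¹,
    translate_inv_translate E t, translate_translate_inv E t⟩

/-- Every endomorphism f of the cosetal extension
N →k→ N ⋊_{E,α}^g H →e→ H (N an abelian group) — a monoid homomorphism with f∘k = k and
e∘f = e — is an automorphism: f([n],h) = ([t(h)·n],h) for some t : H → N and
([n],h) ↦ ([t(h)⁻¹·n],h) is a (well-defined) two-sided inverse. -/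
theorem endomorphism_is_automorphism {H N : Type*} [Monoid H] [CommGroup N]
    (E : IndexedEqv H N) (α : H → N → N) (hα : CompatibleAction E α)
    (g : H → H → N) (hg : IsFactorSet E α g)
    (f : WProd E → WProd E)
    (hmul : ∀ x y, f (wgmul E g hα x y) = wgmul E g hα (f x) (f y))
    (hone : f (wmk E 1 1) = wmk E 1 1)
    (hk : ∀ n : N, f (wmk E 1 n) = wmk E 1 n)
    (he : ∀ x : WProd E, (f x).1 = x.1) :
    ∃ t : H → N,
      (∀ (h : H) (n : N), f (wmk E h n) = wmk E h (t h * n)) ∧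
      ∃ finv : WProd E → WProd E,
        (∀ (h : H) (n : N), finv (wmk E h n) = wmk E h ((t h)⁻¹ * n)) ∧
        (∀ x, finv (f x) = x) ∧ (∀ x, f (finv x) = x) :=
  endomorphism_is_automorphism_general E α hα g hg f hmul hk he
end

section
/- Let N be an abelian group, H a monoid, (E,φ) a compatible pair. The set of crossed homomorphisms t* : H → N relative to (E,φ), modulo the equivalence t*₁ ∼ t*₂ iff t*₁(h) ∼^h t*₂(h) for all h, forms an abelian group under pointwise multiplication. -/
/-- A crossed homomorphism relative to (E,α): t(1) = 1 and
t(h·h') ∼^{h·h'} t(h)·α(h, t(h')). -/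
def IsCrossedHom {H N : Type*} [Monoid H] [CommGroup N] (E : IndexedEqv H N)
    (α : H → N → N) (t : H → N) : Prop :=
  t 1 = 1 ∧ ∀ h h' : H, E.r (h * h') (t (h * h')) (t h * α h (t h'))

/-- The type of crossed homomorphisms relative to (E,α). -/
def CrossedHoms {H N : Type*} [Monoid H] [CommGroup N] (E : IndexedEqv H N)
    (α : H → N → N) : Type _ := {t : H → N // IsCrossedHom E α t}

/-- Two crossed homomorphisms are equivalent iff t₁(h) ∼^h t₂(h) for all h. -/
def chEquiv {H N : Type*} [Monoid H] [CommGroup N] (E : IndexedEqv H N) (α : H → N → N) :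
    CrossedHoms E α → CrossedHoms E α → Prop :=
  fun t₁ t₂ => ∀ h : H, E.r h (t₁.1 h) (t₂.1 h)

/-! Crossed homomorphisms form a subgroup of the pointwise group `H → N`: closure under inverses
comes from `α h n⁻¹ ∼^h (α h n)⁻¹`, a consequence of `c3` and `c5`. Since every `∼^h` is a
congruence on `N`, the relation `t ∼ t'` is a congruence on this subgroup, and the quotient of an
abelian group by a congruence is an abelian group. -/

namespace IndexedEqv

variable {H N : Type*} [Monoid H] [CommMonoid N] (E : IndexedEqv H N)

theorem mul_congr {h : H} {a b c d : N} (hab : E.r h a b) (hcd : E.r h c d) :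
    E.r h (a * c) (b * d) := by
  have hb : E.r h (c * a) (c * b) := E.mul_left c hab
  rw [mul_comm c, mul_comm c] at hb
  exact (E.iseqv h).trans hb (E.mul_left b hcd)

def con_s15 (h : H) : Con N where
  toSetoid := E.setoid h
  mul' := E.mul_congr

end IndexedEqv

namespace CompatibleAction

variable {H N : Type*} [Monoid H] [CommGroup N] {E : IndexedEqv H N} {α : H → N → N}

theorem rel_map_inv (hα : CompatibleAction E α) (h : H) (n : N) :
    E.r h (α h n⁻¹) (α h n)⁻¹ := by
  have hprod : E.r h (α h n * α h n⁻¹) 1 := by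
    refine (E.iseqv h).trans ((E.iseqv h).symm (hα.c3 h n n⁻¹)) ?_
    simpa using hα.c5 h
  simpa using E.mul_left (α h n)⁻¹ hprod

theorem isCrossedHom_one (hα : CompatibleAction E α) : IsCrossedHom E α 1 := by
  refine ⟨rfl, fun h h' => ?_⟩
  simpa using (E.iseqv _).symm (E.mul_right h' (hα.c5 h))

theorem isCrossedHom_mul (hα : CompatibleAction E α) {t t' : H → N}
    (ht : IsCrossedHom E α t) (ht' : IsCrossedHom E α t') : IsCrossedHom E α (t * t') := by
  refine ⟨by simp [ht.1, ht'.1], fun h h' => ?_⟩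
  have hsplit : E.r (h * h') (t h * t' h * α h (t h' * t' h'))
      (t h * α h (t h') * (t' h * α h (t' h'))) := by
    rw [mul_mul_mul_comm]
    exact E.mul_left _ (E.mul_right h' (hα.c3 h _ _))
  exact (E.iseqv _).trans (E.mul_congr (ht.2 h h') (ht'.2 h h')) ((E.iseqv _).symm hsplit)

theorem isCrossedHom_inv (hα : CompatibleAction E α) {t : H → N}
    (ht : IsCrossedHom E α t) : IsCrossedHom E α t⁻¹ := by
  refine ⟨by simp [ht.1], fun h h' => ?_⟩
  have hinv : E.r (h * h') (t (h * h'))⁻¹ (t h * α h (t h'))⁻¹ :=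
    (E.con_s15 (h * h')).inv (ht.2 h h')
  rw [mul_inv] at hinv
  exact (E.iseqv _).trans hinv
    (E.mul_left _ (E.mul_right h' ((E.iseqv h).symm (hα.rel_map_inv h (t h')))))

def crossedHomSubgroup (hα : CompatibleAction E α) : Subgroup (H → N) where
  carrier := {t | IsCrossedHom E α t}
  one_mem' := hα.isCrossedHom_one
  mul_mem' := hα.isCrossedHom_mul
  inv_mem' := hα.isCrossedHom_inv

end CompatibleAction

/-- The crossed homomorphisms relative to (E,α), modulo the equivalence
t₁ ∼ t₂ iff t₁(h) ∼^h t₂(h) for all h, form an abelian group under pointwise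
multiplication (the group Z¹(H,N,E,[α])). -/
theorem crossed_homs_comm_group {H N : Type*} [Monoid H] [CommGroup N] (E : IndexedEqv H N)
    (α : H → N → N) (hα : CompatibleAction E α) :
    Equivalence (chEquiv E α) ∧
    -- crossed homomorphisms are closed under pointwise multiplication
    (∀ t t' : CrossedHoms E α, IsCrossedHom E α (fun h => t.1 h * t'.1 h)) ∧
    -- the quotient is an abelian group under pointwise multiplication
    ∃ G : CommGroup (Quot (chEquiv E α)),
      ∀ (t t' : CrossedHoms E α) (hp : IsCrossedHom E α (fun h => t.1 h * t'.1 h)),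
        G.mul (Quot.mk _ t) (Quot.mk _ t') = Quot.mk _ ⟨fun h => t.1 h * t'.1 h, hp⟩ := by
  -- `c` unfolds to `chEquiv E α`, so `c.Quotient` is `Quot (chEquiv E α)` by definition.
  let c : Con hα.crossedHomSubgroup := (Con.pi E.con_s15).comap Subtype.val fun _ _ => rfl
  exact ⟨c.iseqv, fun t t' => hα.isCrossedHom_mul t.2 t'.2, Con.commGroup c, fun _ _ _ => rfl⟩
end
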